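/- arXiv:2003.09009 — 2 statements merged into one kernel-verified Lean document; each statement's English description precedes it below -/
import Mathlib

section
/- Let d be an association degree satisfying: (i) d(a,b) ∈ [0,1]; (ii) if F(P_b) ≤ F(P_c) and F(P_{ab}) ≥ F(P_{ac}) then d(a,b) ≥ d(a,c); (iii) if P_b \ P_c is nonempty and contained in P_a then d(a,b) ≥ d(a,c). Let e_q be a query entity with presence-instance set P_q, N a node with pruned set PS_N, and define the artificial entity e_v with presence set P_v = P_q \ PS_N (interpreting ST-cell sets). Then for every entity e_p in N (which satisfies P_p ∩ P_q ⊆ P_v), d(e_v, e_q) ≥ d(e_p, e_q); i.e., d(e_v, e_q) is a valid upper bound UB_N. (Theorem 4.1: early-termination upper bound.) -/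
/-- Theorem 4.1 (early-termination upper bound): for an association degree `d`
satisfying the generic constraints, the artificial entity `P_v = P_q \ PS_N`
gives a valid upper bound: `d(e_v, e_q) ≥ d(e_p, e_q)` for every entity `e_p`
in node `N` (which satisfies `P_p ∩ PS_N = ∅`). -/
theorem early_termination_upper_bound {α : Type*} [DecidableEq α]
    (F : Finset α → ℝ) (d : Finset α → Finset α → ℝ)
    (hFmono : ∀ P P' : Finset α, P ⊆ P' → F P ≤ F P')
    (hrange : ∀ a b : Finset α, d a b ∈ Set.Icc (0 : ℝ) 1)
    (hsymm : ∀ a b : Finset α, d a b = d b a)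
    (hmono : ∀ q b c : Finset α, F b ≤ F c → F (q ∩ c) ≤ F (q ∩ b) → d q c ≤ d q b)
    (hdiff : ∀ q b c : Finset α, (b \ c).Nonempty → b \ c ⊆ q → d q c ≤ d q b)
    (Pq PSN Pp : Finset α)
    (hp : Pp ∩ PSN = ∅) :
    d Pp Pq ≤ d (Pq \ PSN) Pq := by
  set Pv := Pq \ PSN with hPv
  rw [hsymm Pp Pq, hsymm Pv Pq]
  have hsub : Pq ∩ Pp ⊆ Pq ∩ Pv := by
    intro x hx
    simp only [Finset.mem_inter, hPv, Finset.mem_sdiff] at *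
    refine ⟨hx.1, hx.1, fun hxs => ?_⟩
    have : x ∈ Pp ∩ PSN := Finset.mem_inter.2 ⟨hx.2, hxs⟩
    simp [hp] at this
  rcases (Pv \ Pp).eq_empty_or_nonempty with hemp | hne
  · have hvp : Pv ⊆ Pp := Finset.sdiff_eq_empty_iff_subset.mp hemp
    exact hmono Pq Pv Pp (hFmono _ _ hvp) (hFmono _ _ hsub)
  · exact hdiff Pq Pv Pp hne (fun x hx => by
      have := Finset.mem_sdiff.mp hx
      exact (Finset.mem_sdiff.mp this.1).1)
end

section
/- If the query terminates in Algorithm 2 when Result.minKey ≥ max UB of remaining candidates and the UB of each node is a valid upper bound on d(e, e') for all entities e' in its subtree, and UBs are non-increasing along root-to-leaf paths, then the k returned entities are exactly a set of top-k entities: for each returned entity e_q and each non-returned entity e_t, d(e, e_q) ≥ d(e, e_t). -/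
/-- Branch-and-bound correctness of Algorithm 2: entities lie in nodes with
valid upper bounds (`d e ≤ UB (node e)`); `X` is the set of explored entities
and every unexplored entity's node is among the remaining candidates `C`;
`R` is the set of the `k` best explored entities; if the algorithm terminates
because each result score is at least every remaining candidate's upper bound,
then `R` is exactly a set of top-`k` entities. -/
theorem branch_and_bound_topk_correct {ε ν : Type*}
    (d : ε → ℝ) (UB : ν → ℝ) (node : ε → ν)
    (E X R : Finset ε) (C : Finset ν) (k : ℕ)
    (hRX : R ⊆ X) (hXE : X ⊆ E) (hk : R.card = k)
    (hvalid : ∀ e, d e ≤ UB (node e))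
    (hcover : ∀ e ∈ E, e ∉ X → node e ∈ C)
    (hbest : ∀ r ∈ R, ∀ x ∈ X, x ∉ R → d x ≤ d r)
    (hterm : ∀ r ∈ R, ∀ N ∈ C, UB N ≤ d r) :
    ∀ q ∈ R, ∀ t ∈ E, t ∉ R → d t ≤ d q := by
  intro q hq t htE htR
  by_cases hX : t ∈ X
  · exact hbest q hq t hX htR
  · exact le_trans (hvalid t) (hterm q hq _ (hcover t htE hX))
end
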